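/- arXiv:0907.0688 — 9 statements merged into one kernel-verified Lean document; each statement's English description precedes it below -/
import Mathlib

section
/- Let φ, ψ : ℤ² → ℂ and α, β : ℤ² → ℝ satisfy, at every point (n,m) ∈ ℤ², the discrete Dirac equation φ(n,m+1) = α(n,m)·φ(n,m) + β(n,m)·ψ(n,m), ψ(n+1,m) = β(n,m)·φ(n,m) + α(n,m)·ψ(n,m), together with α(n,m)² − β(n,m)² = 1. Define F, G : ℤ² → ℝ³ by F(n,m) = (Re(φ(n,m)²), −Im(φ(n,m)²), |φ(n,m)|²) and G(n,m) = (Re(ψ(n,m)²), −Im(ψ(n,m)²), |ψ(n,m)|²). Then the consistency condition F(n,m+1) − F(n,m) = G(n+1,m) − G(n,m) holds for all (n,m) ∈ ℤ², so that F and G are the edge functions of a discrete surface X : ℤ² → ℝ³ (unique up to translation). -/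
/-!
Each component of `E(z) = (Re z², -Im z², |z|²)` is a real quadratic form on `ℂ`, so for real
`a, b` the cross terms cancel in `E(a p + b q) - E(b p + a q) = (a² - b²) (E p - E q)`. Under the
Dirac equation with `a² - b² = 1` this is exactly the consistency condition. A consistent pair of
edge functions integrates to a surface: sum `F` along the axis `m = 0`, then `G` up each vertical
line; consistency makes the difference of two neighbouring vertical sums telescope.
-/

section DiscretePrimitive

variable {M : Type*} [AddCommGroup M]

def discretePrimitive (f : ℤ → M) (n : ℤ) : M :=
  n.inductionOn' 0 0 (fun k _ x => x + f k) (fun k _ x => x - f (k - 1))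

theorem discretePrimitive_zero (f : ℤ → M) : discretePrimitive f 0 = 0 :=
  Int.inductionOn'_self

theorem discretePrimitive_add_one (f : ℤ → M) (n : ℤ) :
    discretePrimitive f (n + 1) = discretePrimitive f n + f n := by
  rcases le_or_gt 0 n with hn | hn
  · exact Int.inductionOn'_add_one hn
  · have h := Int.inductionOn'_sub_one (motive := fun _ => M) (b := 0) (zero := 0)
      (succ := fun k _ x => x + f k) (pred := fun k _ x => x - f (k - 1)) (z := n + 1) (by omega)
    simp only [add_sub_cancel_right] at h
    exact (eq_sub_iff_add_eq.mp h).symm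

theorem discretePrimitive_unique (f P : ℤ → M) (h0 : P 0 = 0)
    (hstep : ∀ n, P (n + 1) = P n + f n) : discretePrimitive f = P := by
  funext n
  induction n with
  | zero => rw [discretePrimitive_zero, h0]
  | succ k ih => rw [discretePrimitive_add_one, ih, hstep]
  | pred k ih =>
    rw [← add_right_cancel_iff (a := f (-k - 1)), ← discretePrimitive_add_one, ← hstep,
      sub_add_cancel, ih]

end DiscretePrimitive

theorem exists_discrete_potential {M : Type*} [AddCommGroup M] (F G : ℤ × ℤ → M)
    (hclosed : ∀ n m : ℤ, F (n, m + 1) - F (n, m) = G (n + 1, m) - G (n, m)) :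
    ∃ X : ℤ × ℤ → M, ∀ n m : ℤ,
      F (n, m) = X (n + 1, m) - X (n, m) ∧ G (n, m) = X (n, m + 1) - X (n, m) := by
  let column (n : ℤ) : ℤ → M := discretePrimitive fun m => G (n, m)
  have hcolumn (n m : ℤ) : column (n + 1) m - column n m = F (n, m) - F (n, 0) := by
    let g := fun m => G (n + 1, m) - G (n, m)
    have hleft : discretePrimitive g = fun m => column (n + 1) m - column n m :=
      discretePrimitive_unique g _ (by simp [column, discretePrimitive_zero])
        (fun m => by simp only [g, column, discretePrimitive_add_one]; abel)
    have hright : discretePrimitive g = fun m => F (n, m) - F (n, 0) :=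
      discretePrimitive_unique g _ (sub_self _) (fun m => by simp only [g, ← hclosed]; abel)
    exact congrFun (hleft.symm.trans hright) m
  refine ⟨fun p => discretePrimitive (fun n => F (n, 0)) p.1 + column p.1 p.2, fun n m => ⟨?_, ?_⟩⟩
  · dsimp only
    rw [discretePrimitive_add_one, ← sub_add_cancel (column (n + 1) m) (column n m), hcolumn]
    abel
  · simp only [column, discretePrimitive_add_one]
    abel

noncomputable def weierstrassEdge (z : ℂ) : ℝ × ℝ × ℝ :=
  ((z ^ 2).re, -(z ^ 2).im, ‖z‖ ^ 2)

theorem weierstrassEdge_sub_weierstrassEdge (a b : ℝ) (p q : ℂ) :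
    weierstrassEdge (a * p + b * q) - weierstrassEdge (b * p + a * q) =
      (a ^ 2 - b ^ 2) • (weierstrassEdge p - weierstrassEdge q) := by
  have hsq : ((a : ℂ) * p + b * q) ^ 2 - (b * p + a * q) ^ 2 =
      ((a ^ 2 - b ^ 2 : ℝ) : ℂ) * (p ^ 2 - q ^ 2) := by
    push_cast
    ring
  have hre := congrArg Complex.re hsq
  have him := congrArg Complex.im hsq
  simp only [Complex.re_ofReal_mul, Complex.im_ofReal_mul, Complex.sub_re, Complex.sub_im]
    at hre him
  simp only [weierstrassEdge, Prod.ext_iff, Prod.fst_sub, Prod.snd_sub, Prod.smul_fst,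
    Prod.smul_snd, smul_eq_mul]
  refine ⟨hre, by linear_combination -him, ?_⟩
  simp only [Complex.sq_norm, Complex.normSq_apply, Complex.add_re, Complex.add_im,
    Complex.mul_re, Complex.mul_im, Complex.ofReal_re, Complex.ofReal_im]
  ring

/-- Solutions of the discrete Dirac equation in the ℝ^{2,1} case satisfy the
consistency condition, so the edge functions F, G integrate to a discrete surface
X : ℤ² → ℝ³ (unique up to translation). -/
theorem discrete_weierstrass_R21_consistency
    (φ ψ : ℤ × ℤ → ℂ) (α β : ℤ × ℤ → ℝ)
    (hφ : ∀ n m : ℤ, φ (n, m + 1) = (α (n, m) : ℂ) * φ (n, m) + (β (n, m) : ℂ) * ψ (n, m))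
    (hψ : ∀ n m : ℤ, ψ (n + 1, m) = (β (n, m) : ℂ) * φ (n, m) + (α (n, m) : ℂ) * ψ (n, m))
    (hαβ : ∀ n m : ℤ, (α (n, m)) ^ 2 - (β (n, m)) ^ 2 = 1)
    (F G : ℤ × ℤ → ℝ × ℝ × ℝ)
    (hF : ∀ n m : ℤ, F (n, m) =
      (((φ (n, m)) ^ 2).re, -((φ (n, m)) ^ 2).im, ‖φ (n, m)‖ ^ 2))
    (hG : ∀ n m : ℤ, G (n, m) =
      (((ψ (n, m)) ^ 2).re, -((ψ (n, m)) ^ 2).im, ‖ψ (n, m)‖ ^ 2)) :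
    (∀ n m : ℤ, F (n, m + 1) - F (n, m) = G (n + 1, m) - G (n, m)) ∧
    ∃ X : ℤ × ℤ → ℝ × ℝ × ℝ, ∀ n m : ℤ,
      F (n, m) = X (n + 1, m) - X (n, m) ∧ G (n, m) = X (n, m + 1) - X (n, m) := by
  have hconsistent : ∀ n m : ℤ, F (n, m + 1) - F (n, m) = G (n + 1, m) - G (n, m) := by
    intro n m
    have hFE : ∀ n m : ℤ, F (n, m) = weierstrassEdge (φ (n, m)) := hF
    have hGE : ∀ n m : ℤ, G (n, m) = weierstrassEdge (ψ (n, m)) := hG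
    rw [hFE, hFE, hGE, hGE, hφ, hψ]
    rw [sub_eq_sub_iff_sub_eq_sub, weierstrassEdge_sub_weierstrassEdge, hαβ, one_smul]
  exact ⟨hconsistent, exists_discrete_potential F G hconsistent⟩
end

section
/- Let X : ℤ² → ℝ³ be a discrete surface with edges F(n,m) = X(n+1,m) − X(n,m) and G(n,m) = X(n,m+1) − X(n,m). Suppose X is non-degenerate (F(n,m) and G(n,m) are linearly independent over ℝ at every point), isotropic for Q(v) = v₁² + v₂² − v₃² (Q(F(n,m)) = 0 = Q(G(n,m)) for all (n,m)), and satisfies the monotonicity condition F₃(n,m) > 0 and G₃(n,m) > 0 for all (n,m). Then there exist functions φ, ψ : ℤ² → ℂ and α, β : ℤ² → ℝ such that at every point φ(n,m+1) = α·φ + β·ψ, ψ(n+1,m) = β·φ + α·ψ, α² − β² = 1, and F(n,m) = (Re(φ²), −Im(φ²), |φ|²), G(n,m) = (Re(ψ²), −Im(ψ²), |ψ|²). -/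
/-!
A future null vector of `ℝ^{2,1}` is `W z = (Re z², -Im z², |z|²)` (`W = weierstrassMap`) for some
`z : ℂ`, unique up to sign, so `F = W φ₀` and `G = W ψ₀`. Closing the quadrilateral at `(n, m)`
gives `W φ' - W φ = W ψ' - W ψ` with `φ' = φ₀ (n, m + 1)`, `ψ' = ψ₀ (n + 1, m)`. Non-degeneracy
makes `φ, ψ` an `ℝ`-basis of `ℂ`, and then `W φ`, `W ψ` and the polarization of `W` at `(φ, ψ)`
are a basis of `ℝ³`. Writing `φ' = a φ + b ψ`, `ψ' = c φ + d ψ` and comparing coefficients gives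
`a² - c² = 1 = d² - b²` and `a b = c d`, whence `(c, d) = ±(b, a)`. The signs are absorbed by
multiplying `φ₀` with their running product along each line `n = const`.
-/

theorem Int.exists_add_one_eq_mul {G : Type*} [Group G] (f : ℤ → G) :
    ∃ s : ℤ → G, ∀ m, s (m + 1) = s m * f m := by
  let s (m : ℤ) : G := Int.inductionOn' (motive := fun _ => G) m 0 1 (fun k _ x => x * f k)
    (fun k _ x => x * (f (k - 1))⁻¹)
  refine ⟨s, fun m => ?_⟩
  rcases le_or_gt 0 m with hm | hm
  · exact Int.inductionOn'_add_one hm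
  · have h : s (m + 1 - 1) = s (m + 1) * (f (m + 1 - 1))⁻¹ :=
      Int.inductionOn'_sub_one (by omega)
    rw [add_sub_cancel_right] at h
    rw [h, inv_mul_cancel_right]

theorem Int.cast_units_sq {R : Type*} [Ring R] (u : ℤˣ) : ((u : ℤ) : R) ^ 2 = 1 := by
  rw [← Int.cast_pow, ← Units.val_pow_eq_pow_val, Int.units_sq, Units.val_one, Int.cast_one]

open Complex ComplexConjugate

noncomputable def weierstrassMap (z : ℂ) : ℝ × ℝ × ℝ := ((z ^ 2).re, -(z ^ 2).im, ‖z‖ ^ 2)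

noncomputable def weierstrassPolar (z w : ℂ) : ℝ × ℝ × ℝ :=
  ((z * w).re, -(z * w).im, (z * conj w).re)

theorem weierstrassMap_ofReal_mul (r : ℝ) (z : ℂ) :
    weierstrassMap (r * z) = r ^ 2 • weierstrassMap z := by
  simp only [weierstrassMap, mul_pow, ← ofReal_pow, re_ofReal_mul, im_ofReal_mul, norm_mul,
    norm_real, Real.norm_eq_abs, sq_abs, Prod.smul_mk, smul_eq_mul]
  ring_nf

theorem weierstrassMap_add (a b : ℝ) (φ ψ : ℂ) :
    weierstrassMap (a * φ + b * ψ) =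
      a ^ 2 • weierstrassMap φ + b ^ 2 • weierstrassMap ψ + (2 * a * b) • weierstrassPolar φ ψ := by
  simp only [weierstrassMap, weierstrassPolar, Complex.sq_norm]
  simp only [normSq_apply, Prod.smul_mk, Prod.mk_add_mk, smul_eq_mul, Prod.mk.injEq, pow_two,
    add_re, add_im, mul_re, mul_im, ofReal_re, ofReal_im, conj_re, conj_im]
  refine ⟨by ring, by ring, by ring⟩

theorem exists_weierstrassMap_eq {v : ℝ × ℝ × ℝ} (hv : v.1 ^ 2 + v.2.1 ^ 2 - v.2.2 ^ 2 = 0)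
    (hv₃ : 0 ≤ v.2.2) : ∃ z, weierstrassMap z = v := by
  obtain ⟨z, hz⟩ := IsAlgClosed.exists_pow_nat_eq (⟨v.1, -v.2.1⟩ : ℂ) two_pos
  refine ⟨z, Prod.ext (by simp [weierstrassMap, hz]) (Prod.ext (by simp [weierstrassMap, hz]) ?_)⟩
  rw [weierstrassMap, ← norm_pow, hz, norm_eq_sqrt_sq_add_sq]
  simp only [neg_sq, show v.1 ^ 2 + v.2.1 ^ 2 = v.2.2 ^ 2 by linarith, Real.sqrt_sq hv₃]

theorem im_conj_mul_ne_zero_of_linearIndependent {φ ψ : ℂ}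
    (h : LinearIndependent ℝ ![weierstrassMap φ, weierstrassMap ψ]) : (conj φ * ψ).im ≠ 0 := by
  intro hD
  rw [LinearIndependent.pair_iff] at h
  by_cases hφ : φ = 0
  · exact one_ne_zero (h 1 0 (by simp [hφ, weierstrassMap])).1
  have hψ : (normSq φ : ℂ) * ψ = ((conj φ * ψ).re : ℂ) * φ := by
    rw [← mul_conj, show ((conj φ * ψ).re : ℂ) = conj φ * ψ from ext rfl (by simp [hD])]
    ring
  have hW := congrArg weierstrassMap hψ
  rw [weierstrassMap_ofReal_mul, weierstrassMap_ofReal_mul] at hW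
  have := (h ((conj φ * ψ).re ^ 2) (-normSq φ ^ 2) (by rw [← hW, neg_smul, add_neg_cancel])).2
  exact hφ (by simpa using this)

theorem exists_eq_ofReal_mul_add {φ ψ : ℂ} (hD : (conj φ * ψ).im ≠ 0) (z : ℂ) :
    ∃ a b : ℝ, z = a * φ + b * ψ := by
  refine ⟨(conj z * ψ).im / (conj φ * ψ).im, (conj φ * z).im / (conj φ * ψ).im, ?_⟩
  simp only [mul_im, conj_re, conj_im, neg_mul, ← sub_eq_add_neg] at hD ⊢
  apply Complex.ext <;>
    simp only [add_re, add_im, re_ofReal_mul, im_ofReal_mul] <;>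
    rw [div_mul_eq_mul_div, div_mul_eq_mul_div, ← add_div, eq_div_iff hD] <;>
    ring

theorem eq_zero_of_weierstrass_combination_eq_zero {φ ψ : ℂ} (hD : (conj φ * ψ).im ≠ 0) {u v w : ℝ}
    (h : u • weierstrassMap φ + v • weierstrassMap ψ + w • weierstrassPolar φ ψ = 0) :
    u = 0 ∧ v = 0 ∧ w = 0 := by
  simp only [weierstrassMap, weierstrassPolar, Complex.sq_norm] at h
  simp only [normSq_apply, Prod.smul_mk, Prod.mk_add_mk, smul_eq_mul, Prod.mk_eq_zero, pow_two,
    mul_re, mul_im, conj_re, conj_im] at h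
  simp only [mul_im, conj_re, conj_im, neg_mul, ← sub_eq_add_neg] at hD
  obtain ⟨hre, him, hn⟩ := h
  have hφ : φ.re * φ.re + φ.im * φ.im ≠ 0 := by
    contrapose! hD
    obtain ⟨hp, hq⟩ := mul_self_add_mul_self_eq_zero.mp hD
    simp [hp, hq]
  have hv : v = 0 := by
    have h2 : v * (2 * (φ.re * ψ.im - φ.im * ψ.re) ^ 2) = 0 := by
      linear_combination (φ.re * φ.re + φ.im * φ.im) * hn - (φ.re * φ.re - φ.im * φ.im) * hre
        + (2 * (φ.re * φ.im)) * him
    simpa [hD] using h2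
  subst hv
  have hw : w = 0 := by
    have h3 : w * ((φ.re * φ.re + φ.im * φ.im) * (φ.re * ψ.im - φ.im * ψ.re)) = 0 := by
      linear_combination -(φ.re * φ.re - φ.im * φ.im) * him - (2 * (φ.re * φ.im)) * hre
    simpa [hD, hφ] using h3
  subst hw
  have h4 : u * (φ.re * φ.re + φ.im * φ.im) = 0 := by linear_combination hn
  exact ⟨by simpa [hφ] using h4, rfl, rfl⟩

theorem exists_dirac_step {φ ψ φ' ψ' : ℂ} (hD : (conj φ * ψ).im ≠ 0)
    (h : weierstrassMap φ' + weierstrassMap ψ = weierstrassMap ψ' + weierstrassMap φ) :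
    ∃ (a b : ℝ) (e : ℤˣ), φ' = a * φ + b * ψ ∧ ψ' = (e : ℂ) * (b * φ + a * ψ) ∧
      a ^ 2 - b ^ 2 = 1 := by
  obtain ⟨a, b, rfl⟩ := exists_eq_ofReal_mul_add hD φ'
  obtain ⟨c, d, rfl⟩ := exists_eq_ofReal_mul_add hD ψ'
  rw [weierstrassMap_add, weierstrassMap_add] at h
  obtain ⟨hu, hv, hw⟩ := eq_zero_of_weierstrass_combination_eq_zero hD (u := a ^ 2 - c ^ 2 - 1)
    (v := b ^ 2 - d ^ 2 + 1) (w := 2 * (a * b - c * d)) (by linear_combination (norm := module) h)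
  have hab : a ^ 2 - b ^ 2 = 1 := by
    linear_combination (b ^ 2 + 1) * hu + c ^ 2 * hv - ((a * b + c * d) / 2) * hw
  -- the sign relating `ψ'` to `b φ + a ψ` is the determinant of the change of basis
  set e := a * d - b * c
  have he : e * e = 1 := by
    linear_combination (-a ^ 2) * hv + (-b ^ 2) * hu + (a * b) * hw + hab
  have hc : c = e * b := by linear_combination c * hv - (d / 2) * hw
  have hd : d = e * a := by linear_combination (-d) * hu + (c / 2) * hw
  refine ⟨a, b, ?_⟩
  rcases mul_self_eq_one_iff.mp he with he | he
  · refine ⟨1, rfl, ?_, hab⟩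
    rw [hc, hd, he]; push_cast; ring
  · refine ⟨-1, rfl, ?_, hab⟩
    rw [hc, hd, he]; push_cast; ring

theorem weierstrassMap_units_mul (u : ℤˣ) (z : ℂ) :
    weierstrassMap ((u : ℂ) * z) = weierstrassMap z := by
  rw [← ofReal_intCast, weierstrassMap_ofReal_mul, Int.cast_units_sq, one_smul]

/-- Every non-degenerate isotropic discrete surface in ℝ^{2,1} satisfying the
monotonicity condition F₃ > 0, G₃ > 0 arises from a solution of the discrete Dirac equation
via the discrete Weierstrass representation. -/
theorem discrete_weierstrass_R21_converse
    (X : ℤ × ℤ → ℝ × ℝ × ℝ)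
    (F G : ℤ × ℤ → ℝ × ℝ × ℝ)
    (hF : ∀ n m : ℤ, F (n, m) = X (n + 1, m) - X (n, m))
    (hG : ∀ n m : ℤ, G (n, m) = X (n, m + 1) - X (n, m))
    (hnondeg : ∀ n m : ℤ, LinearIndependent ℝ ![F (n, m), G (n, m)])
    (hFiso : ∀ n m : ℤ, (F (n, m)).1 ^ 2 + (F (n, m)).2.1 ^ 2 - (F (n, m)).2.2 ^ 2 = 0)
    (hGiso : ∀ n m : ℤ, (G (n, m)).1 ^ 2 + (G (n, m)).2.1 ^ 2 - (G (n, m)).2.2 ^ 2 = 0)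
    (hFmono : ∀ n m : ℤ, 0 < (F (n, m)).2.2)
    (hGmono : ∀ n m : ℤ, 0 < (G (n, m)).2.2) :
    ∃ (φ ψ : ℤ × ℤ → ℂ) (α β : ℤ × ℤ → ℝ), ∀ n m : ℤ,
      φ (n, m + 1) = (α (n, m) : ℂ) * φ (n, m) + (β (n, m) : ℂ) * ψ (n, m) ∧
      ψ (n + 1, m) = (β (n, m) : ℂ) * φ (n, m) + (α (n, m) : ℂ) * ψ (n, m) ∧
      (α (n, m)) ^ 2 - (β (n, m)) ^ 2 = 1 ∧
      F (n, m) = (((φ (n, m)) ^ 2).re, -((φ (n, m)) ^ 2).im, ‖φ (n, m)‖ ^ 2) ∧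
      G (n, m) = (((ψ (n, m)) ^ 2).re, -((ψ (n, m)) ^ 2).im, ‖ψ (n, m)‖ ^ 2) := by
  choose φ₀ hφ₀ using fun n m => exists_weierstrassMap_eq (hFiso n m) (hFmono n m).le
  choose ψ₀ hψ₀ using fun n m => exists_weierstrassMap_eq (hGiso n m) (hGmono n m).le
  have hD (n m : ℤ) : (conj (φ₀ n m) * ψ₀ n m).im ≠ 0 :=
    im_conj_mul_ne_zero_of_linearIndependent (by rw [hφ₀, hψ₀]; exact hnondeg n m)
  have hclose (n m : ℤ) : weierstrassMap (φ₀ n (m + 1)) + weierstrassMap (ψ₀ n m) =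
      weierstrassMap (ψ₀ (n + 1) m) + weierstrassMap (φ₀ n m) := by
    rw [hφ₀, hφ₀, hψ₀, hψ₀, hF, hF, hG, hG]; abel
  choose a b e hφ hψ hab using fun n m => exists_dirac_step (hD n m) (hclose n m)
  choose s hs using fun n => Int.exists_add_one_eq_mul (e n)
  refine ⟨fun p => (s p.1 p.2 : ℂ) * φ₀ p.1 p.2, fun p => ψ₀ p.1 p.2,
    fun p => e p.1 p.2 * a p.1 p.2, fun p => s p.1 p.2 * e p.1 p.2 * b p.1 p.2,
    fun n m => ⟨?_, ?_, ?_, ?_, ?_⟩⟩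
  · simp only [hs, hφ, Units.val_mul, Int.cast_mul, ofReal_mul, ofReal_intCast]
    ring
  · simp only [hψ, ofReal_mul, ofReal_intCast]
    linear_combination (-((e n m : ℤ) : ℂ) * b n m * φ₀ n m) * Int.cast_units_sq (R := ℂ) (s n m)
  · linear_combination (a n m ^ 2 - b n m ^ 2) * Int.cast_units_sq (R := ℝ) (e n m)
      - (b n m ^ 2 * ((e n m : ℤ) : ℝ) ^ 2) * Int.cast_units_sq (R := ℝ) (s n m) + hab n m
  · exact ((weierstrassMap_units_mul _ _).trans (hφ₀ n m)).symm
  · exact (hψ₀ n m).symm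
end

section
/- Let φ₁, φ₂, ψ₁, ψ₂ : ℤ² → ℂ and α, β : ℤ² → ℂ satisfy, at every point (n,m) ∈ ℤ² and for i = 1,2, the discrete Dirac equation φᵢ(n,m+1) = α(n,m)·φᵢ(n,m) + β(n,m)·ψᵢ(n,m), ψᵢ(n+1,m) = conj(β(n,m))·φᵢ(n,m) + conj(α(n,m))·ψᵢ(n,m), together with |α(n,m)|² − |β(n,m)|² = 1. Define F, G : ℤ² → ℝ⁴ by F(n,m) = (Re(φ₁·conj(φ₂)), −Im(φ₁·conj(φ₂)), (|φ₁|² − |φ₂|²)/2, (|φ₁|² + |φ₂|²)/2) and G(n,m) by the same formulas with ψ₁, ψ₂ in place of φ₁, φ₂. Then the consistency condition F(n,m+1) − F(n,m) = G(n+1,m) − G(n,m) holds for all (n,m) ∈ ℤ², so that F and G are the edge functions of a discrete surface X : ℤ² → ℝ⁴ (unique up to translation). -/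
/-!
The Dirac equation says that `(φᵢ(n,m+1), ψᵢ(n+1,m))` is obtained from `(φᵢ(n,m), ψᵢ(n,m))` by the
matrix `[[α, β], [conj β, conj α]]`, which lies in `U(1,1)` when `|α|² - |β|² = 1`: it preserves the
Hermitian form `x₁ conj y₁ - x₂ conj y₂`. The difference `F - G` of the two edge vectors is a
real-linear function of the values of this form on the pairs `(φᵢ, ψᵢ)`, hence
`F(n,m+1) - G(n+1,m) = F(n,m) - G(n,m)`, which is the consistency condition. A consistent pair of
edge functions on `ℤ²` is then integrated along the axis `m = 0` and up the columns.
-/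

open ComplexConjugate

section Integration

variable {V : Type*} [AddCommGroup V]

theorem Int.exists_add_one_sub_eq (f : ℤ → V) : ∃ g : ℤ → V, ∀ k, g (k + 1) - g k = f k := by
  refine ⟨fun k => ∑ i ∈ Finset.Ico 0 k, f i - ∑ i ∈ Finset.Ico k 0, f i, fun k => ?_⟩
  beta_reduce
  rcases le_or_gt 0 k with hk | hk
  · rw [← Finset.insert_Ico_right_eq_Ico_add_one hk, Finset.sum_insert Finset.right_notMem_Ico,
      Finset.Ico_eq_empty_of_le hk, Finset.Ico_eq_empty_of_le (show (0 : ℤ) ≤ k + 1 by omega)]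
    abel
  · rw [← Finset.insert_Ico_add_one_left_eq_Ico hk, Finset.sum_insert (by simp),
      Finset.Ico_eq_empty_of_le hk.le, Finset.Ico_eq_empty_of_le (show k + 1 ≤ 0 by omega)]
    abel

theorem exists_potential_of_sub_eq_sub (F G : ℤ × ℤ → V)
    (hFG : ∀ n m : ℤ, F (n, m + 1) - F (n, m) = G (n + 1, m) - G (n, m)) :
    ∃ X : ℤ × ℤ → V, ∀ n m : ℤ,
      F (n, m) = X (n + 1, m) - X (n, m) ∧ G (n, m) = X (n, m + 1) - X (n, m) := by
  obtain ⟨A, hA⟩ := Int.exists_add_one_sub_eq fun n => F (n, 0)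
  choose B hB using fun n => Int.exists_add_one_sub_eq fun m => G (n, m)
  refine ⟨fun p => A p.1 + (B p.1 p.2 - B p.1 0), fun n m => ⟨?_, by simp only [← hB]; abel⟩⟩
  set defect := fun m =>
    A (n + 1) + (B (n + 1) m - B (n + 1) 0) - (A n + (B n m - B n 0)) - F (n, m)
  have hperiodic : Function.Periodic defect 1 := fun m => by
    simp only [defect, eq_add_of_sub_eq (hB _ m), eq_add_of_sub_eq (hFG n m)]
    abel
  have hzero : defect 0 = 0 := by simp only [defect, ← hA]; abel
  have := hperiodic.int_mul_eq m
  rw [mul_one, hzero] at this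
  exact (sub_eq_zero.mp this).symm

end Integration

section DiracStep

variable {R : Type*} [CommRing R] [StarRing R]

def indefSesq (x y : R × R) : R := x.1 * star y.1 - x.2 * star y.2

def diracStep (a b : R) (x : R × R) : R × R := (a * x.1 + b * x.2, star b * x.1 + star a * x.2)

theorem indefSesq_diracStep {a b : R} (hab : a * star a - b * star b = 1) (x y : R × R) :
    indefSesq (diracStep a b x) (diracStep a b y) = indefSesq x y := by
  simp only [indefSesq, diracStep, star_add, star_mul, star_star]
  linear_combination (x.1 * star y.1 - x.2 * star y.2) * hab

end DiracStep

noncomputable def edgeVector (u v : ℂ) : ℝ × ℝ × ℝ × ℝ :=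
  ((u * conj v).re, -(u * conj v).im, (‖u‖ ^ 2 - ‖v‖ ^ 2) / 2, (‖u‖ ^ 2 + ‖v‖ ^ 2) / 2)

theorem edgeVector_sub_edgeVector (x y : ℂ × ℂ) :
    edgeVector x.1 y.1 - edgeVector x.2 y.2 =
      ((indefSesq x y).re, -(indefSesq x y).im,
        ((indefSesq x x).re - (indefSesq y y).re) / 2,
        ((indefSesq x x).re + (indefSesq y y).re) / 2) := by
  simp only [edgeVector, indefSesq, Prod.mk_sub_mk, Complex.sub_re, Complex.sub_im,
    Complex.star_def, Complex.mul_conj', ← Complex.ofReal_pow, Complex.ofReal_re]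
  refine Prod.ext rfl (Prod.ext (by ring) (Prod.ext (by ring) (by ring)))

theorem edgeVector_diracStep_sub {a b : ℂ} (hab : ‖a‖ ^ 2 - ‖b‖ ^ 2 = 1) (x y : ℂ × ℂ) :
    edgeVector (diracStep a b x).1 (diracStep a b y).1 -
        edgeVector (diracStep a b x).2 (diracStep a b y).2 =
      edgeVector x.1 y.1 - edgeVector x.2 y.2 := by
  have hab' : a * star a - b * star b = 1 := by
    simp only [Complex.star_def, Complex.mul_conj']
    exact_mod_cast hab
  simp only [edgeVector_sub_edgeVector, indefSesq_diracStep hab']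

/-- Solutions of the discrete Dirac equation in the ℝ^{3,1} case satisfy the
consistency condition, so the edge functions F, G integrate to a discrete surface
X : ℤ² → ℝ⁴ (unique up to translation). -/
theorem discrete_weierstrass_R31_consistency
    (φ₁ φ₂ ψ₁ ψ₂ : ℤ × ℤ → ℂ) (α β : ℤ × ℤ → ℂ)
    (hφ₁ : ∀ n m : ℤ, φ₁ (n, m + 1) = α (n, m) * φ₁ (n, m) + β (n, m) * ψ₁ (n, m))
    (hφ₂ : ∀ n m : ℤ, φ₂ (n, m + 1) = α (n, m) * φ₂ (n, m) + β (n, m) * ψ₂ (n, m))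
    (hψ₁ : ∀ n m : ℤ, ψ₁ (n + 1, m) =
      (starRingEnd ℂ) (β (n, m)) * φ₁ (n, m) + (starRingEnd ℂ) (α (n, m)) * ψ₁ (n, m))
    (hψ₂ : ∀ n m : ℤ, ψ₂ (n + 1, m) =
      (starRingEnd ℂ) (β (n, m)) * φ₂ (n, m) + (starRingEnd ℂ) (α (n, m)) * ψ₂ (n, m))
    (hαβ : ∀ n m : ℤ, ‖α (n, m)‖ ^ 2 - ‖β (n, m)‖ ^ 2 = 1)
    (F G : ℤ × ℤ → ℝ × ℝ × ℝ × ℝ)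
    (hF : ∀ n m : ℤ, F (n, m) =
      ((φ₁ (n, m) * (starRingEnd ℂ) (φ₂ (n, m))).re,
       -(φ₁ (n, m) * (starRingEnd ℂ) (φ₂ (n, m))).im,
       (‖φ₁ (n, m)‖ ^ 2 - ‖φ₂ (n, m)‖ ^ 2) / 2,
       (‖φ₁ (n, m)‖ ^ 2 + ‖φ₂ (n, m)‖ ^ 2) / 2))
    (hG : ∀ n m : ℤ, G (n, m) =
      ((ψ₁ (n, m) * (starRingEnd ℂ) (ψ₂ (n, m))).re,
       -(ψ₁ (n, m) * (starRingEnd ℂ) (ψ₂ (n, m))).im,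
       (‖ψ₁ (n, m)‖ ^ 2 - ‖ψ₂ (n, m)‖ ^ 2) / 2,
       (‖ψ₁ (n, m)‖ ^ 2 + ‖ψ₂ (n, m)‖ ^ 2) / 2)) :
    (∀ n m : ℤ, F (n, m + 1) - F (n, m) = G (n + 1, m) - G (n, m)) ∧
    ∃ X : ℤ × ℤ → ℝ × ℝ × ℝ × ℝ, ∀ n m : ℤ,
      F (n, m) = X (n + 1, m) - X (n, m) ∧ G (n, m) = X (n, m + 1) - X (n, m) := by
  have hF' : ∀ n m, F (n, m) = edgeVector (φ₁ (n, m)) (φ₂ (n, m)) := hF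
  have hG' : ∀ n m, G (n, m) = edgeVector (ψ₁ (n, m)) (ψ₂ (n, m)) := hG
  have hconsistent : ∀ n m : ℤ, F (n, m + 1) - F (n, m) = G (n + 1, m) - G (n, m) := by
    intro n m
    rw [sub_eq_sub_iff_sub_eq_sub, hF', hF', hG', hG', hφ₁, hφ₂, hψ₁, hψ₂]
    exact edgeVector_diracStep_sub (hαβ n m) (φ₁ (n, m), ψ₁ (n, m)) (φ₂ (n, m), ψ₂ (n, m))
  exact ⟨hconsistent, exists_potential_of_sub_eq_sub F G hconsistent⟩
end

section
/- Let X : ℤ² → ℝ⁴ be a discrete surface with edges F(n,m) = X(n+1,m) − X(n,m) and G(n,m) = X(n,m+1) − X(n,m). Suppose X is non-degenerate (F(n,m) and G(n,m) are linearly independent over ℝ at every point), isotropic for Q(v) = v₁² + v₂² + v₃² − v₄² (Q(F(n,m)) = 0 = Q(G(n,m)) for all (n,m)), and satisfies the monotonicity condition F₄(n,m) > 0 and G₄(n,m) > 0 for all (n,m). Then there exist functions φ₁, φ₂, ψ₁, ψ₂ : ℤ² → ℂ and α, β : ℤ² → ℂ such that at every point and for i = 1,2: φᵢ(n,m+1)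 = α·φᵢ + β·ψᵢ, ψᵢ(n+1,m) = conj(β)·φᵢ + conj(α)·ψᵢ, |α|² − |β|² = 1, and F(n,m) = (Re(φ₁·conj(φ₂)), −Im(φ₁·conj(φ₂)), (|φ₁|² − |φ₂|²)/2, (|φ₁|² + |φ₂|²)/2), with G(n,m) given by the same formulas with ψ₁, ψ₂ in place of φ₁, φ₂. -/
/-!
Write an isotropic vector `v` with `v₄ > 0` as the rank-one Hermitian matrix `p pᴴ` of a spinor
`p ∈ ℂ²`, unique up to a phase. Closedness of the edges, `F(n,m+1) + G(n,m) = G(n+1,m) + F(n,m)`,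
says that the frame `M = [φ | ψ]` at `(n,m)` and the frame `M' = [φ(n,m+1) | ψ(n+1,m)]` satisfy
`M' J M'ᴴ = M J Mᴴ` with `J = diag(1,-1)`; non-degeneracy makes `M` invertible, so `M' = M T` with
`T ∈ U(1,1)`. Such a `T` has the form `[[α, d β̄], [β, d ᾱ]]` with `|d| = 1`, and rotating the
phase of `φ` along each column `n = const` by the cumulative product of the `d̄`'s removes `d`.
-/

open Complex ComplexConjugate
open scoped Matrix

theorem mul_mul_eq_of_mul_mul_eq_of_mul_self_eq_one {M : Type*} [Monoid M]
    [IsDedekindFiniteMonoid M] {j s t : M} (hj : j * j = 1) (h : t * j * s = j) :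
    s * j * t = j := by
  have : t * (j * s * j) = 1 := by rw [← mul_assoc, ← mul_assoc, h, hj]
  calc s * j * t = j * j * (s * j * t) := by rw [hj, one_mul]
    _ = j * (j * s * j * t) := by simp only [mul_assoc]
    _ = j := by rw [mul_eq_one_comm.1 this, mul_one]

theorem exists_eq_smul_of_det_eq_zero {K : Type*} [Field K] {p q : Fin 2 → K} (hp : p ≠ 0)
    (hdet : p 0 * q 1 - p 1 * q 0 = 0) : ∃ c : K, q = c • p := by
  by_cases h0 : p 0 = 0
  · have h1 : p 1 ≠ 0 := fun h1 => hp (by ext i; fin_cases i <;> simp [h0, h1])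
    refine ⟨q 1 / p 1, funext fun i => ?_⟩
    fin_cases i
    · simp only [h0, zero_mul, zero_sub, neg_eq_zero, mul_eq_zero, h1, false_or] at hdet
      simp [h0, hdet]
    · simp [h1]
  · refine ⟨q 0 / p 0, funext fun i => ?_⟩
    fin_cases i
    · simp [h0]
    · simp only [Fin.mk_one, Pi.smul_apply, smul_eq_mul]
      field_simp
      linear_combination hdet

def cumulativeProd {G : Type*} [CommGroup G] (w : ℤ → G) : ℤ → G
  | (n : ℕ) => ∏ k ∈ Finset.range n, w k
  | Int.negSucc n => (∏ k ∈ Finset.range (n + 1), w (Int.negSucc k))⁻¹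

theorem cumulativeProd_add_one {G : Type*} [CommGroup G] (w : ℤ → G) (m : ℤ) :
    cumulativeProd w (m + 1) = cumulativeProd w m * w m := by
  rcases m with n | _ | n
  · exact Finset.prod_range_succ _ n
  · simp [cumulativeProd]
  · rw [show Int.negSucc (n + 1) + 1 = Int.negSucc n by omega]
    simp [cumulativeProd, Finset.prod_range_succ _ (n + 1)]

namespace DiscreteWeierstrass

noncomputable def nullVector (p : Fin 2 → ℂ) : ℝ × ℝ × ℝ × ℝ :=
  ((p 0 * conj (p 1)).re, -(p 0 * conj (p 1)).im,
    (‖p 0‖ ^ 2 - ‖p 1‖ ^ 2) / 2, (‖p 0‖ ^ 2 + ‖p 1‖ ^ 2) / 2)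

noncomputable def toHermitian (v : ℝ × ℝ × ℝ × ℝ) : Matrix (Fin 2) (Fin 2) ℂ :=
  !![v.2.2.2 + v.2.2.1, v.1 - v.2.1 * I; v.1 + v.2.1 * I, v.2.2.2 - v.2.2.1]

theorem toHermitian_add (v w : ℝ × ℝ × ℝ × ℝ) :
    toHermitian (v + w) = toHermitian v + toHermitian w := by
  ext i j
  fin_cases i <;> fin_cases j <;> simp [toHermitian] <;> ring

theorem toHermitian_nullVector (p : Fin 2 → ℂ) :
    toHermitian (nullVector p) = Matrix.vecMulVec p (star p) := by
  ext i j
  fin_cases i <;> fin_cases j <;> simp [toHermitian, nullVector, Matrix.vecMulVec_apply]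
  · linear_combination -mul_conj' (p 0)
  · apply Complex.ext <;> simp
  · apply Complex.ext <;> simp <;> ring
  · linear_combination -mul_conj' (p 1)

theorem nullVector_smul (c : ℂ) (p : Fin 2 → ℂ) :
    nullVector (c • p) = ‖c‖ ^ 2 • nullVector p := by
  have h : c * p 0 * conj (c * p 1) = (‖c‖ ^ 2 : ℝ) * (p 0 * conj (p 1)) := by
    rw [map_mul, ofReal_pow, ← mul_conj']; ring
  simp only [nullVector, Pi.smul_apply, smul_eq_mul, h, re_ofReal_mul, im_ofReal_mul, norm_mul,
    Prod.smul_mk]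
  exact Prod.ext rfl (Prod.ext (by ring) (Prod.ext (by ring) (by ring)))

theorem nullVector_smul_of_norm_eq_one {u : ℂ} (hu : ‖u‖ = 1) (p : Fin 2 → ℂ) :
    nullVector (u • p) = nullVector p := by
  rw [nullVector_smul, hu, one_pow, one_smul]

theorem nullVector_eq {p : Fin 2 → ℂ} {v : ℝ × ℝ × ℝ × ℝ}
    (h0 : ‖p 0‖ ^ 2 = v.2.2.2 + v.2.2.1) (h1 : ‖p 1‖ ^ 2 = v.2.2.2 - v.2.2.1)
    (h01 : p 0 * conj (p 1) = v.1 - v.2.1 * I) : nullVector p = v := by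
  obtain ⟨v1, v2, v3, v4⟩ := v
  simp only [nullVector, h0, h1, h01, sub_re, ofReal_re, mul_re, I_re, mul_zero, ofReal_im, I_im,
    mul_one, sub_zero, sub_im, mul_im, zero_sub, neg_neg, Prod.mk.injEq]
  exact ⟨trivial, by ring, by ring, by ring⟩

theorem exists_mul_conj_eq {z : ℂ} {s t : ℝ} (hs : 0 < s) (h : ‖z‖ ^ 2 = s * t) :
    ∃ a b : ℂ, ‖a‖ ^ 2 = s ∧ ‖b‖ ^ 2 = t ∧ a * conj b = z := by
  have hsqrt : (√s : ℂ) ≠ 0 := by exact_mod_cast (Real.sqrt_pos.2 hs).ne'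
  refine ⟨√s, conj z / √s, ?_, ?_, ?_⟩
  · simp [Real.sq_sqrt hs.le]
  · rw [norm_div, norm_conj, div_pow, h]
    simp [Real.sq_sqrt hs.le, hs.ne']
  · rw [map_div₀, conj_conj, conj_ofReal]
    field_simp

theorem exists_nullVector_eq {v : ℝ × ℝ × ℝ × ℝ}
    (hiso : v.1 ^ 2 + v.2.1 ^ 2 + v.2.2.1 ^ 2 - v.2.2.2 ^ 2 = 0) (hpos : 0 < v.2.2.2) :
    ∃ p, nullVector p = v := by
  obtain ⟨v1, v2, v3, v4⟩ := v
  dsimp only at hiso hpos ⊢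
  have hz : ‖(v1 - v2 * I : ℂ)‖ ^ 2 = (v4 + v3) * (v4 - v3) := by
    rw [Complex.sq_norm, show (v1 - v2 * I : ℂ) = v1 + (-v2 : ℝ) * I by push_cast; ring,
      normSq_add_mul_I]
    linear_combination hiso
  rcases lt_or_ge 0 (v4 + v3) with hs | hs
  · obtain ⟨a, b, ha, hb, hab⟩ := exists_mul_conj_eq hs hz
    exact ⟨![a, b], nullVector_eq ha hb hab⟩
  · obtain ⟨a, b, ha, hb, hab⟩ :=
      exists_mul_conj_eq (z := conj (v1 - v2 * I)) (s := v4 - v3) (t := v4 + v3) (by linarith)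
        (by rw [norm_conj, hz]; ring)
    refine ⟨![b, a], nullVector_eq hb ha ?_⟩
    simpa [mul_comm, sub_eq_add_neg] using congrArg conj hab

theorem det_ne_zero_of_linearIndependent_nullVector {p q : Fin 2 → ℂ}
    (h : LinearIndependent ℝ ![nullVector p, nullVector q]) : p 0 * q 1 - p 1 * q 0 ≠ 0 := by
  intro hdet
  have hp : p ≠ 0 := by
    rintro rfl
    exact h.ne_zero 0 (by simp [nullVector])
  obtain ⟨c, rfl⟩ := exists_eq_smul_of_det_eq_zero hp hdet
  rw [nullVector_smul] at h
  have := LinearIndependent.pair_iff.1 h (‖c‖ ^ 2) (-1) (by simp)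
  norm_num at this

def J : Matrix (Fin 2) (Fin 2) ℂ := Matrix.diagonal ![1, -1]

theorem J_mul_J : J * J = 1 := by
  rw [J, Matrix.diagonal_mul_diagonal, ← Matrix.diagonal_one]
  congr 1; ext i; fin_cases i <;> simp

theorem exists_eq_of_conjTranspose_mul_J_mul_self_eq {T : Matrix (Fin 2) (Fin 2) ℂ}
    (h : Tᴴ * J * T = J) :
    ∃ x y d : ℂ, ‖d‖ = 1 ∧ ‖x‖ ^ 2 - ‖y‖ ^ 2 = 1 ∧ T = !![x, d * conj y; y, d * conj x] := by
  have entry (i j : Fin 2) := congrFun (congrFun h i) j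
  have h00 : conj (T 0 0) * T 0 0 - conj (T 1 0) * T 1 0 = 1 := by
    simpa [J, Matrix.mul_apply, Fin.sum_univ_two, sub_eq_add_neg] using entry 0 0
  have h01 : conj (T 0 0) * T 0 1 - conj (T 1 0) * T 1 1 = 0 := by
    simpa [J, Matrix.mul_apply, Fin.sum_univ_two, sub_eq_add_neg] using entry 0 1
  have h11 : conj (T 0 1) * T 0 1 - conj (T 1 1) * T 1 1 = -1 := by
    simpa [J, Matrix.mul_apply, Fin.sum_univ_two, sub_eq_add_neg] using entry 1 1
  set d := T 0 0 * T 1 1 - T 0 1 * T 1 0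
  have h01' : T 0 1 = d * conj (T 1 0) := by linear_combination (-T 0 1) * h00 + T 0 0 * h01
  have h11' : T 1 1 = d * conj (T 0 0) := by linear_combination (-T 1 1) * h00 + T 1 0 * h01
  have hd : d * conj d = 1 := by
    rw [h01', h11'] at h11
    simp only [map_mul, conj_conj] at h11
    linear_combination -h11 - d * conj d * h00
  refine ⟨T 0 0, T 1 0, d, ?_, ?_, ?_⟩
  · rw [mul_conj'] at hd
    exact (pow_eq_one_iff_of_nonneg (norm_nonneg d) two_ne_zero).1 (by exact_mod_cast hd)
  · have : ((‖T 0 0‖ ^ 2 - ‖T 1 0‖ ^ 2 : ℝ) : ℂ) = 1 := by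
      push_cast
      rw [← mul_conj', ← mul_conj']
      linear_combination h00
    exact_mod_cast this
  · ext i j
    fin_cases i <;> fin_cases j
    · rfl
    · exact h01'
    · rfl
    · exact h11'

theorem exists_eq_mul_of_mul_J_mul_conjTranspose_eq {M M' : Matrix (Fin 2) (Fin 2) ℂ}
    (hM : M.det ≠ 0) (h : M' * J * M'ᴴ = M * J * Mᴴ) :
    ∃ x y d : ℂ, ‖d‖ = 1 ∧ ‖x‖ ^ 2 - ‖y‖ ^ 2 = 1 ∧
      M' = M * !![x, d * conj y; y, d * conj x] := by
  have hMu : IsUnit M := (Matrix.isUnit_iff_isUnit_det M).2 (isUnit_iff_ne_zero.2 hM)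
  set T := M⁻¹ * M'
  have hMT : M * T = M' := Matrix.mul_nonsing_inv_cancel_left M M' (isUnit_iff_ne_zero.2 hM)
  have hT : T * J * Tᴴ = J := by
    rw [← hMT, Matrix.conjTranspose_mul] at h
    simp only [← mul_assoc] at h
    have := hMu.mul_left_cancel (by simpa only [mul_assoc] using h)
    exact hMu.star.mul_right_cancel
      (by simpa only [mul_assoc, Matrix.star_eq_conjTranspose] using this)
  obtain ⟨x, y, d, hd, hxy, hTxy⟩ := exists_eq_of_conjTranspose_mul_J_mul_self_eq
    (mul_mul_eq_of_mul_mul_eq_of_mul_self_eq_one J_mul_J hT)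
  exact ⟨x, y, d, hd, hxy, by rw [← hMT, hTxy]⟩

def pairMatrix (p q : Fin 2 → ℂ) : Matrix (Fin 2) (Fin 2) ℂ := (Matrix.of ![p, q])ᵀ

theorem pairMatrix_det (p q : Fin 2 → ℂ) : (pairMatrix p q).det = p 0 * q 1 - p 1 * q 0 := by
  simp [pairMatrix, Matrix.det_fin_two]

theorem pairMatrix_mul (p q : Fin 2 → ℂ) (T : Matrix (Fin 2) (Fin 2) ℂ) :
    pairMatrix p q * T = pairMatrix (T 0 0 • p + T 1 0 • q) (T 0 1 • p + T 1 1 • q) := by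
  ext i j
  fin_cases j <;> simp [pairMatrix, Matrix.mul_apply, Fin.sum_univ_two, mul_comm]

theorem pairMatrix_inj {p q p' q' : Fin 2 → ℂ} :
    pairMatrix p q = pairMatrix p' q' ↔ p = p' ∧ q = q' := by
  simp [pairMatrix]

theorem pairMatrix_mul_J_mul_conjTranspose (p q : Fin 2 → ℂ) :
    pairMatrix p q * J * (pairMatrix p q)ᴴ =
      Matrix.vecMulVec p (star p) - Matrix.vecMulVec q (star q) := by
  ext i j
  simp [pairMatrix, J, Matrix.mul_apply, Fin.sum_univ_two, Matrix.vecMulVec_apply]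
  ring

theorem exists_u11_of_nullVector_add_eq {p q p' q' : Fin 2 → ℂ}
    (hdet : p 0 * q 1 - p 1 * q 0 ≠ 0)
    (h : nullVector p' + nullVector q = nullVector q' + nullVector p) :
    ∃ x y d : ℂ, ‖d‖ = 1 ∧ ‖x‖ ^ 2 - ‖y‖ ^ 2 = 1 ∧
      p' = x • p + y • q ∧ q' = (d * conj y) • p + (d * conj x) • q := by
  have hJ : pairMatrix p' q' * J * (pairMatrix p' q')ᴴ =
      pairMatrix p q * J * (pairMatrix p q)ᴴ := by
    have := congrArg toHermitian h
    simp only [toHermitian_add, toHermitian_nullVector] at this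
    rw [pairMatrix_mul_J_mul_conjTranspose, pairMatrix_mul_J_mul_conjTranspose,
      sub_eq_sub_iff_add_eq_add, this, add_comm]
  obtain ⟨x, y, d, hd, hxy, hM⟩ :=
    exists_eq_mul_of_mul_J_mul_conjTranspose_eq (by rwa [pairMatrix_det]) hJ
  rw [pairMatrix_mul, pairMatrix_inj] at hM
  exact ⟨x, y, d, hd, hxy, by simpa using hM⟩

/-- One step of the discrete Dirac equation, from `(φ, ψ)` at `(n,m)` to `φ' = φ(n,m+1)` and
`ψ' = ψ(n+1,m)`. -/
def IsDiracStep (φ ψ φ' ψ' : Fin 2 → ℂ) (α β : ℂ) : Prop :=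
  φ' = α • φ + β • ψ ∧ ψ' = conj β • φ + conj α • ψ ∧ ‖α‖ ^ 2 - ‖β‖ ^ 2 = 1

theorem isDiracStep_smul {p q p' q' : Fin 2 → ℂ} {x y d u : ℂ} (hu : ‖u‖ = 1) (hd : ‖d‖ = 1)
    (hxy : ‖x‖ ^ 2 - ‖y‖ ^ 2 = 1) (hp' : p' = x • p + y • q)
    (hq' : q' = (d * conj y) • p + (d * conj x) • q) :
    IsDiracStep (u • p) q ((conj d * u) • p') q' (conj d * x) (conj d * u * y) := by
  have hu' : conj u * u = 1 := by rw [mul_comm, mul_conj', hu]; simp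
  refine ⟨by rw [hp']; module, ?_, by simp [hu, hd, hxy]⟩
  rw [hq']
  simp only [map_mul, conj_conj]
  linear_combination (norm := module) (-(d * conj y) * hu') • p

theorem exists_isDiracStep (f g : ℤ → ℤ → Fin 2 → ℂ)
    (hdet : ∀ n m, f n m 0 * g n m 1 - f n m 1 * g n m 0 ≠ 0)
    (hclosed : ∀ n m, nullVector (f n (m + 1)) + nullVector (g n m) =
      nullVector (g (n + 1) m) + nullVector (f n m)) :
    ∃ u α β : ℤ → ℤ → ℂ, ∀ n m, ‖u n m‖ = 1 ∧
      IsDiracStep (u n m • f n m) (g n m) (u n (m + 1) • f n (m + 1)) (g (n + 1) m)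
        (α n m) (β n m) := by
  choose x y d hd hxy hf hg using
    fun n m => exists_u11_of_nullVector_add_eq (hdet n m) (hclosed n m)
  let w (n m : ℤ) : Circle := ⟨conj (d n m), mem_sphere_zero_iff_norm.2 (by rw [norm_conj, hd])⟩
  let u (n m : ℤ) : ℂ := (cumulativeProd (w n) m : Circle)
  refine ⟨u, fun n m => conj (d n m) * x n m, fun n m => conj (d n m) * u n m * y n m,
    fun n m => ⟨Circle.norm_coe (cumulativeProd (w n) m), ?_⟩⟩
  have hu : u n (m + 1) = conj (d n m) * u n m := by
    simp only [u, cumulativeProd_add_one, Circle.coe_mul]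
    exact mul_comm _ _
  rw [hu]
  exact isDiracStep_smul (Circle.norm_coe _) (hd n m) (hxy n m) (hf n m) (hg n m)

end DiscreteWeierstrass

open DiscreteWeierstrass

/-- Every non-degenerate isotropic discrete surface in ℝ^{3,1} satisfying the
monotonicity condition F₄ > 0, G₄ > 0 arises from a solution of the discrete Dirac equation
via the discrete Weierstrass representation. -/
theorem discrete_weierstrass_R31_converse
    (X : ℤ × ℤ → ℝ × ℝ × ℝ × ℝ)
    (F G : ℤ × ℤ → ℝ × ℝ × ℝ × ℝ)
    (hF : ∀ n m : ℤ, F (n, m) = X (n + 1, m) - X (n, m))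
    (hG : ∀ n m : ℤ, G (n, m) = X (n, m + 1) - X (n, m))
    (hnondeg : ∀ n m : ℤ, LinearIndependent ℝ ![F (n, m), G (n, m)])
    (hFiso : ∀ n m : ℤ,
      (F (n, m)).1 ^ 2 + (F (n, m)).2.1 ^ 2 + (F (n, m)).2.2.1 ^ 2 - (F (n, m)).2.2.2 ^ 2 = 0)
    (hGiso : ∀ n m : ℤ,
      (G (n, m)).1 ^ 2 + (G (n, m)).2.1 ^ 2 + (G (n, m)).2.2.1 ^ 2 - (G (n, m)).2.2.2 ^ 2 = 0)
    (hFmono : ∀ n m : ℤ, 0 < (F (n, m)).2.2.2)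
    (hGmono : ∀ n m : ℤ, 0 < (G (n, m)).2.2.2) :
    ∃ (φ₁ φ₂ ψ₁ ψ₂ : ℤ × ℤ → ℂ) (α β : ℤ × ℤ → ℂ), ∀ n m : ℤ,
      φ₁ (n, m + 1) = α (n, m) * φ₁ (n, m) + β (n, m) * ψ₁ (n, m) ∧
      φ₂ (n, m + 1) = α (n, m) * φ₂ (n, m) + β (n, m) * ψ₂ (n, m) ∧
      ψ₁ (n + 1, m) =
        (starRingEnd ℂ) (β (n, m)) * φ₁ (n, m) + (starRingEnd ℂ) (α (n, m)) * ψ₁ (n, m) ∧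
      ψ₂ (n + 1, m) =
        (starRingEnd ℂ) (β (n, m)) * φ₂ (n, m) + (starRingEnd ℂ) (α (n, m)) * ψ₂ (n, m) ∧
      ‖α (n, m)‖ ^ 2 - ‖β (n, m)‖ ^ 2 = 1 ∧
      F (n, m) =
        ((φ₁ (n, m) * (starRingEnd ℂ) (φ₂ (n, m))).re,
         -(φ₁ (n, m) * (starRingEnd ℂ) (φ₂ (n, m))).im,
         (‖φ₁ (n, m)‖ ^ 2 - ‖φ₂ (n, m)‖ ^ 2) / 2,
         (‖φ₁ (n, m)‖ ^ 2 + ‖φ₂ (n, m)‖ ^ 2) / 2) ∧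
      G (n, m) =
        ((ψ₁ (n, m) * (starRingEnd ℂ) (ψ₂ (n, m))).re,
         -(ψ₁ (n, m) * (starRingEnd ℂ) (ψ₂ (n, m))).im,
         (‖ψ₁ (n, m)‖ ^ 2 - ‖ψ₂ (n, m)‖ ^ 2) / 2,
         (‖ψ₁ (n, m)‖ ^ 2 + ‖ψ₂ (n, m)‖ ^ 2) / 2) := by
  choose f hf using fun n m => exists_nullVector_eq (hFiso n m) (hFmono n m)
  choose g hg using fun n m => exists_nullVector_eq (hGiso n m) (hGmono n m)
  have hdet n m : f n m 0 * g n m 1 - f n m 1 * g n m 0 ≠ 0 :=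
    det_ne_zero_of_linearIndependent_nullVector (by rw [hf, hg]; exact hnondeg n m)
  have hclosed n m : nullVector (f n (m + 1)) + nullVector (g n m) =
      nullVector (g (n + 1) m) + nullVector (f n m) := by
    rw [hf, hf, hg, hg, hF, hF, hG, hG]; abel
  obtain ⟨u, α, β, hstep⟩ := exists_isDiracStep f g hdet hclosed
  refine ⟨fun p => u p.1 p.2 * f p.1 p.2 0, fun p => u p.1 p.2 * f p.1 p.2 1,
    fun p => g p.1 p.2 0, fun p => g p.1 p.2 1, fun p => α p.1 p.2, fun p => β p.1 p.2,
    fun n m => ?_⟩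
  obtain ⟨hu, hφ, hψ, hαβ⟩ := hstep n m
  refine ⟨congrFun hφ 0, congrFun hφ 1, congrFun hψ 0, congrFun hψ 1, hαβ, ?_, (hg n m).symm⟩
  rw [← hf, ← nullVector_smul_of_norm_eq_one hu]
  rfl
end

section
/- Let (a, b, c, d) ∈ ℝ⁴ satisfy a² + b² = c² + d². Then there exist φ₁, φ₂ ∈ ℂ such that a = Re(φ₁φ₂), b = −Im(φ₁φ₂), c = Re(φ₁·conj(φ₂)), d = −Im(φ₁·conj(φ₂)). -/
/-- Parametrization of the light cone of Q(v) = v₁² + v₂² − v₃² − v₄² on ℝ⁴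
by a pair of complex numbers. -/
theorem lightcone_param_R22 (a b c d : ℝ) (h : a ^ 2 + b ^ 2 = c ^ 2 + d ^ 2) :
    ∃ φ₁ φ₂ : ℂ,
      a = (φ₁ * φ₂).re ∧
      b = -(φ₁ * φ₂).im ∧
      c = (φ₁ * (starRingEnd ℂ) φ₂).re ∧
      d = -(φ₁ * (starRingEnd ℂ) φ₂).im := by
  set z : ℂ := ⟨a, -b⟩ with hzdef
  set w : ℂ := ⟨c, -d⟩ with hwdef
  have hnorm : Complex.normSq z = Complex.normSq w := by
    simp [Complex.normSq_apply, hzdef, hwdef]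
    nlinarith [h]
  by_cases hz : z = 0
  · have hw : w = 0 := by
      have : Complex.normSq w = 0 := by rw [← hnorm, hz]; simp
      exact Complex.normSq_eq_zero.mp this
    have hz' := Complex.ext_iff.mp hz
    have hw' := Complex.ext_iff.mp hw
    simp [hzdef, hwdef] at hz' hw'
    refine ⟨0, 0, ?_, ?_, ?_, ?_⟩ <;> simp [hz'.1, hz'.2, hw'.1, hw'.2]
  · have hw : w ≠ 0 := by
      intro hw0
      apply hz
      apply Complex.normSq_eq_zero.mp
      rw [hnorm, hw0]; simp
    obtain ⟨s, hs⟩ : ∃ s : ℂ, s ^ 2 = z * (starRingEnd ℂ) w :=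
      IsAlgClosed.exists_pow_nat_eq _ (n := 2) (by norm_num)
    have hs0 : s ≠ 0 := by
      intro h0
      rw [h0] at hs
      have := hs.symm
      simp at this
      rcases this with h1 | h1
      · exact hz h1
      · exact hw h1
    have hnsq : Complex.normSq s = Complex.normSq z := by
      have h1 : Complex.normSq s ^ 2 = Complex.normSq z ^ 2 := by
        have := congrArg Complex.normSq hs
        rw [map_pow, map_mul, Complex.normSq_conj, ← hnorm] at this
        linarith [this]
      nlinarith [Complex.normSq_nonneg s, Complex.normSq_nonneg z]
    refine ⟨z / s, s, ?_, ?_, ?_, ?_⟩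
    · rw [div_mul_cancel₀ _ hs0]
    · rw [div_mul_cancel₀ _ hs0]; simp [hzdef]
    all_goals
      have key : z / s * (starRingEnd ℂ) s = w := by
        rw [div_mul_eq_mul_div, div_eq_iff hs0]
        have h1 : z * (starRingEnd ℂ) s * s = z * (Complex.normSq s : ℂ) := by
          rw [mul_assoc]
          congr 1
          rw [mul_comm, Complex.mul_conj]
        have h2 : w * s * s = w * (z * (starRingEnd ℂ) w) := by
          rw [mul_assoc, ← sq, hs]
        apply mul_right_cancel₀ hs0
        rw [h1, h2, hnsq]
        have h3 : w * (z * (starRingEnd ℂ) w) = z * (Complex.normSq w : ℂ) := by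
          rw [← Complex.mul_conj]; ring
        rw [h3, hnorm]
      rw [key]
    simp [hwdef]
end

section
/- Let α₁, β₁, γ₁, δ₁, α₂, β₂, γ₂, δ₂ ∈ ℝ satisfy α₁α₂ − γ₁γ₂ = 1, δ₁δ₂ − β₁β₂ = 1, α₁β₂ − γ₁δ₂ = 0, and α₂β₁ − γ₂δ₁ = 0. Then there exists λ ∈ ℝ, λ ≠ 0, such that α₂ = λ·δ₁, β₂ = λ·γ₁, γ₂ = λ·β₁, and δ₂ = λ·α₁. -/
/-- Algebraic lemma coupling the two generalized discrete Dirac operators in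
the ℝ^{2,2} case. -/
theorem dirac_reduction_R22 (α₁ β₁ γ₁ δ₁ α₂ β₂ γ₂ δ₂ : ℝ)
    (h1 : α₁ * α₂ - γ₁ * γ₂ = 1) (h2 : δ₁ * δ₂ - β₁ * β₂ = 1)
    (h3 : α₁ * β₂ - γ₁ * δ₂ = 0) (h4 : α₂ * β₁ - γ₂ * δ₁ = 0) :
    ∃ lam : ℝ, lam ≠ 0 ∧ α₂ = lam * δ₁ ∧ β₂ = lam * γ₁ ∧ γ₂ = lam * β₁ ∧ δ₂ = lam * α₁ := by
  set d := α₁ * δ₁ - β₁ * γ₁ with hd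
  set lam := α₂ * δ₂ - β₂ * γ₂ with hl
  have hA : d * α₂ = δ₁ := by linear_combination δ₁ * h1 - γ₁ * h4
  have hB : d * β₂ = γ₁ := by linear_combination δ₁ * h3 + γ₁ * h2
  have hG : d * γ₂ = β₁ := by linear_combination β₁ * h1 - α₁ * h4
  have hD : d * δ₂ = α₁ := by linear_combination β₁ * h3 + α₁ * h2
  have key : d * lam = 1 := by linear_combination α₂ * hD - γ₂ * hB + h1
  refine ⟨lam, ?_, ?_, ?_, ?_, ?_⟩
  · intro h; rw [h, mul_zero] at key; exact one_ne_zero key.symm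
  · linear_combination lam * hA - α₂ * key
  · linear_combination lam * hB - β₂ * key
  · linear_combination lam * hG - γ₂ * key
  · linear_combination lam * hD - δ₂ * key
end

section
/- Let p : ℝ² → ℝ and let φ, ψ : ℝ² → ℂ be differentiable functions satisfying ∂φ/∂y (x,y) = p(x,y)·ψ(x,y) and ∂ψ/∂x (x,y) = p(x,y)·φ(x,y) for all (x,y) ∈ ℝ². Define E₁, E₂ : ℝ² → ℝ³ by E₁ = (Re(φ²), −Im(φ²), |φ|²) and E₂ = (Re(ψ²), −Im(ψ²), |ψ|²). Then: (a) for all (x,y), ∂E₁/∂y (x,y) = ∂E₂/∂x (x,y), i.e. the ℝ³-valued 1-form E₁ dx + E₂ dy is closed; and (b) Q(E₁(x,y)) = 0 and Q(E₂(x,y)) = 0 for all (x,y), where Q(v) = v₁² + v₂² − v₃². -/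
/-!
`E₁` and `E₂` are the images of `φ` and `ψ` under the quadratic map
`L z = (Re z², -Im z², |z|²)`, whose polarization `B` is symmetric and `ℝ`-bilinear. So
`∂_y E₁ = 2 B(φ, ∂_y φ) = 2p B(φ, ψ) = 2p B(ψ, φ) = 2 B(ψ, ∂_x ψ) = ∂_x E₂`, and isotropy
is `|z²|² = |z|⁴`.
-/

open ComplexConjugate

noncomputable def lightlikeLift (z : ℂ) : ℝ × ℝ × ℝ :=
  ((z ^ 2).re, -(z ^ 2).im, ‖z‖ ^ 2)

def lightlikeForm (z w : ℂ) : ℝ × ℝ × ℝ :=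
  ((z * w).re, -(z * w).im, (w * conj z).re)

theorem lightlikeForm_comm (z w : ℂ) : lightlikeForm z w = lightlikeForm w z := by
  simp only [lightlikeForm, Prod.mk.injEq, Complex.mul_re, Complex.mul_im, Complex.conj_re,
    Complex.conj_im]
  refine ⟨by ring, by ring, by ring⟩

theorem lightlikeForm_ofReal_mul (z w : ℂ) (r : ℝ) :
    lightlikeForm z (r * w) = r • lightlikeForm z w := by
  simp only [lightlikeForm, Prod.smul_mk, smul_eq_mul, Prod.mk.injEq, Complex.mul_re,
    Complex.mul_im, Complex.conj_re, Complex.conj_im, Complex.ofReal_re, Complex.ofReal_im]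
  refine ⟨by ring, by ring, by ring⟩

theorem lightlikeLift_isotropic (z : ℂ) :
    (lightlikeLift z).1 ^ 2 + (lightlikeLift z).2.1 ^ 2 - (lightlikeLift z).2.2 ^ 2 = 0 := by
  have h : ((z ^ 2).re) ^ 2 + ((z ^ 2).im) ^ 2 = (‖z‖ ^ 2) ^ 2 := by
    rw [Complex.sq_norm, ← map_pow, Complex.normSq_apply]
    ring
  simp only [lightlikeLift]
  linarith

section

variable {E : Type*} [NormedAddCommGroup E] [NormedSpace ℝ E] {f : E → ℂ} {f' : E →L[ℝ] ℂ}
  {x : E}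

theorem HasFDerivAt.lightlikeLift (hf : HasFDerivAt f f' x) :
    HasFDerivAt (fun y => lightlikeLift (f y))
      ((Complex.reCLM.comp ((2 * f x) • f')).prod
        ((-Complex.imCLM.comp ((2 * f x) • f')).prod (2 • (innerSL ℝ (f x)).comp f'))) x := by
  have hsq : HasFDerivAt (fun y => f y ^ 2) ((2 * f x) • f') x := by
    simpa using hf.pow 2
  exact (Complex.reCLM.hasFDerivAt.comp x hsq).prodMk
    ((Complex.imCLM.hasFDerivAt.comp x hsq).neg.prodMk hf.norm_sq)

theorem fderiv_lightlikeLift_apply (hf : DifferentiableAt ℝ f x) (v : E) :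
    fderiv ℝ (fun y => lightlikeLift (f y)) x v = 2 • lightlikeForm (f x) (fderiv ℝ f x v) := by
  rw [hf.hasFDerivAt.lightlikeLift.fderiv]
  ext <;>
  simp only [lightlikeForm, ContinuousLinearMap.prod_apply, ContinuousLinearMap.comp_apply,
    neg_apply, smul_apply, innerSL_apply_apply, Complex.inner, Complex.reCLM_apply,
    Complex.imCLM_apply, Prod.smul_fst, Prod.smul_snd, smul_eq_mul, Complex.mul_re,
    Complex.mul_im, Complex.re_ofNat, Complex.im_ofNat] <;>
  ring

end

/-- Closedness and isotropy of the ℝ³-valued 1-form E₁ dx + E₂ dy built from a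
solution of the Dirac equation, underlying the Weierstrass representation of time-like
surfaces in ℝ^{2,1}. -/
theorem weierstrass_R21_closed_isotropic
    (p : ℝ × ℝ → ℝ) (φ ψ : ℝ × ℝ → ℂ)
    (hφdiff : Differentiable ℝ φ) (hψdiff : Differentiable ℝ ψ)
    (hφ : ∀ x y : ℝ, fderiv ℝ φ (x, y) (0, 1) = (p (x, y) : ℂ) * ψ (x, y))
    (hψ : ∀ x y : ℝ, fderiv ℝ ψ (x, y) (1, 0) = (p (x, y) : ℂ) * φ (x, y))
    (E₁ E₂ : ℝ × ℝ → ℝ × ℝ × ℝ)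
    (hE₁ : ∀ x y : ℝ, E₁ (x, y) =
      (((φ (x, y)) ^ 2).re, -((φ (x, y)) ^ 2).im, ‖φ (x, y)‖ ^ 2))
    (hE₂ : ∀ x y : ℝ, E₂ (x, y) =
      (((ψ (x, y)) ^ 2).re, -((ψ (x, y)) ^ 2).im, ‖ψ (x, y)‖ ^ 2)) :
    ∀ x y : ℝ,
      fderiv ℝ E₁ (x, y) (0, 1) = fderiv ℝ E₂ (x, y) (1, 0) ∧
      (E₁ (x, y)).1 ^ 2 + (E₁ (x, y)).2.1 ^ 2 - (E₁ (x, y)).2.2 ^ 2 = 0 ∧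
      (E₂ (x, y)).1 ^ 2 + (E₂ (x, y)).2.1 ^ 2 - (E₂ (x, y)).2.2 ^ 2 = 0 := by
  have hE₁' : E₁ = fun q => lightlikeLift (φ q) := funext fun ⟨x, y⟩ => hE₁ x y
  have hE₂' : E₂ = fun q => lightlikeLift (ψ q) := funext fun ⟨x, y⟩ => hE₂ x y
  intro x y
  refine ⟨?_, ?_, ?_⟩
  · rw [hE₁', hE₂', fderiv_lightlikeLift_apply (hφdiff _), fderiv_lightlikeLift_apply (hψdiff _),
      hφ, hψ, lightlikeForm_ofReal_mul, lightlikeForm_ofReal_mul, lightlikeForm_comm]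
  · rw [hE₁']
    exact lightlikeLift_isotropic _
  · rw [hE₂']
    exact lightlikeLift_isotropic _
end

section
/- Let p : ℝ² → ℂ and let φ₁, φ₂, ψ₁, ψ₂ : ℝ² → ℂ be differentiable functions satisfying, for i = 1,2 and all (x,y) ∈ ℝ², ∂φᵢ/∂y (x,y) = p(x,y)·ψᵢ(x,y) and ∂ψᵢ/∂x (x,y) = conj(p(x,y))·φᵢ(x,y). Define E₁, E₂ : ℝ² → ℝ⁴ by E₁ = (Re(φ₁·conj(φ₂)), −Im(φ₁·conj(φ₂)), (|φ₁|² − |φ₂|²)/2, (|φ₁|² + |φ₂|²)/2) and E₂ by the same formulas with ψ₁, ψ₂ in place of φ₁, φ₂. Then: (a) for all (x,y), ∂E₁/∂y (x,y) = ∂E₂/∂x (x,y), i.e. the ℝ⁴-valued 1-form E₁ dx + E₂ dy is closed; and (b) Q(E₁(x,y)) = 0 and Q(E₂(x,y)) = 0 for all (x,y), where Q(v) = v₁² + v₂² + v₃² − v₄². -/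
/-!
Each component of `E₁` is a real-linear combination of the Hermitian products `φᵢ * conj φⱼ`,
and `E₂` is the same combination of the `ψᵢ * conj ψⱼ`. The Dirac system gives, for all `i, j`,
`∂_y (φᵢ * conj φⱼ) = p ψᵢ conj φⱼ + conj p φᵢ conj ψⱼ = ∂_x (ψᵢ * conj ψⱼ)`, which is the
closedness. Isotropy is the pointwise identity `|a * conj b|² = |a|² |b|²`.
-/

open ComplexConjugate

section HermitianProduct

variable {E : Type*} [NormedAddCommGroup E] [NormedSpace ℝ E] {f g : E → ℂ} {z : E}

theorem DifferentiableAt.mul_conj (hf : DifferentiableAt ℝ f z) (hg : DifferentiableAt ℝ g z) :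
    DifferentiableAt ℝ (fun q => f q * conj (g q)) z :=
  hf.mul hg.star

theorem fderiv_mul_conj_apply (hf : DifferentiableAt ℝ f z) (hg : DifferentiableAt ℝ g z)
    (v : E) :
    fderiv ℝ (fun q => f q * conj (g q)) z v =
      fderiv ℝ f z v * conj (g z) + f z * conj (fderiv ℝ g z v) := by
  have hg' : HasFDerivAt (fun q => conj (g q)) _ z := hg.hasFDerivAt.star
  rw [(hf.hasFDerivAt.fun_mul hg').fderiv]
  simp only [add_apply, smul_apply, ContinuousLinearMap.comp_apply,
    ContinuousLinearEquiv.coe_coe, starL'_apply, RCLike.star_def, smul_eq_mul]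
  ring

theorem fderiv_mul_conj_eq_of_dirac {φ ψ φ' ψ' : E → ℂ} {u v : E} {p : ℂ}
    (hφ : DifferentiableAt ℝ φ z) (hφ' : DifferentiableAt ℝ φ' z)
    (hψ : DifferentiableAt ℝ ψ z) (hψ' : DifferentiableAt ℝ ψ' z)
    (hφu : fderiv ℝ φ z u = p * ψ z) (hφ'u : fderiv ℝ φ' z u = p * ψ' z)
    (hψv : fderiv ℝ ψ z v = conj p * φ z) (hψ'v : fderiv ℝ ψ' z v = conj p * φ' z) :
    fderiv ℝ (fun q => φ q * conj (φ' q)) z u = fderiv ℝ (fun q => ψ q * conj (ψ' q)) z v := by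
  rw [fderiv_mul_conj_apply hφ hφ', fderiv_mul_conj_apply hψ hψ', hφu, hφ'u, hψv, hψ'v]
  simp only [map_mul, Complex.conj_conj]
  ring

end HermitianProduct

noncomputable def spinorVector (a b : ℂ) : ℝ × ℝ × ℝ × ℝ :=
  ((a * conj b).re, -(a * conj b).im, (‖a‖ ^ 2 - ‖b‖ ^ 2) / 2, (‖a‖ ^ 2 + ‖b‖ ^ 2) / 2)

theorem spinorVector_isotropic (a b : ℂ) :
    (spinorVector a b).1 ^ 2 + (spinorVector a b).2.1 ^ 2 + (spinorVector a b).2.2.1 ^ 2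
      - (spinorVector a b).2.2.2 ^ 2 = 0 := by
  have h := Complex.sq_norm_sub_sq_re (a * conj b)
  rw [norm_mul, Complex.norm_conj] at h
  simp only [spinorVector]
  linear_combination -h

noncomputable def spinorVectorCLM : ℂ × ℂ × ℂ →L[ℝ] ℝ × ℝ × ℝ × ℝ :=
  LinearMap.toContinuousLinearMap
    { toFun := fun w => (w.1.re, -w.1.im, (w.2.1.re - w.2.2.re) / 2, (w.2.1.re + w.2.2.re) / 2)
      map_add' := fun u w => by ext <;> simp <;> ring
      map_smul' := fun c w => by ext <;> simp <;> ring }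

theorem spinorVector_eq_spinorVectorCLM (a b : ℂ) :
    spinorVector a b = spinorVectorCLM (a * conj b, a * conj a, b * conj b) := by
  simp [spinorVector, spinorVectorCLM, Complex.mul_conj, Complex.sq_norm]

theorem fderiv_spinorVector_apply {E : Type*} [NormedAddCommGroup E] [NormedSpace ℝ E]
    {f g : E → ℂ} {z : E} (hf : DifferentiableAt ℝ f z) (hg : DifferentiableAt ℝ g z) (v : E) :
    fderiv ℝ (fun q => spinorVector (f q) (g q)) z v =
      spinorVectorCLM (fderiv ℝ (fun q => f q * conj (g q)) z v,
        fderiv ℝ (fun q => f q * conj (f q)) z v, fderiv ℝ (fun q => g q * conj (g q)) z v) := by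
  have hF := (hf.mul_conj hg).hasFDerivAt.prodMk
    ((hf.mul_conj hf).hasFDerivAt.prodMk (hg.mul_conj hg).hasFDerivAt)
  simp only [spinorVector_eq_spinorVectorCLM]
  exact DFunLike.congr_fun (spinorVectorCLM.hasFDerivAt.comp z hF).fderiv v

/-- Closedness and isotropy of the ℝ⁴-valued 1-form E₁ dx + E₂ dy built from a
solution of the Dirac equation, underlying the Weierstrass representation of time-like
surfaces in ℝ^{3,1}. -/
theorem weierstrass_R31_closed_isotropic
    (p : ℝ × ℝ → ℂ) (φ₁ φ₂ ψ₁ ψ₂ : ℝ × ℝ → ℂ)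
    (hφ₁diff : Differentiable ℝ φ₁) (hφ₂diff : Differentiable ℝ φ₂)
    (hψ₁diff : Differentiable ℝ ψ₁) (hψ₂diff : Differentiable ℝ ψ₂)
    (hφ₁ : ∀ x y : ℝ, fderiv ℝ φ₁ (x, y) (0, 1) = p (x, y) * ψ₁ (x, y))
    (hφ₂ : ∀ x y : ℝ, fderiv ℝ φ₂ (x, y) (0, 1) = p (x, y) * ψ₂ (x, y))
    (hψ₁ : ∀ x y : ℝ, fderiv ℝ ψ₁ (x, y) (1, 0) = (starRingEnd ℂ) (p (x, y)) * φ₁ (x, y))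
    (hψ₂ : ∀ x y : ℝ, fderiv ℝ ψ₂ (x, y) (1, 0) = (starRingEnd ℂ) (p (x, y)) * φ₂ (x, y))
    (E₁ E₂ : ℝ × ℝ → ℝ × ℝ × ℝ × ℝ)
    (hE₁ : ∀ x y : ℝ, E₁ (x, y) =
      ((φ₁ (x, y) * (starRingEnd ℂ) (φ₂ (x, y))).re,
       -(φ₁ (x, y) * (starRingEnd ℂ) (φ₂ (x, y))).im,
       (‖φ₁ (x, y)‖ ^ 2 - ‖φ₂ (x, y)‖ ^ 2) / 2,
       (‖φ₁ (x, y)‖ ^ 2 + ‖φ₂ (x, y)‖ ^ 2) / 2))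
    (hE₂ : ∀ x y : ℝ, E₂ (x, y) =
      ((ψ₁ (x, y) * (starRingEnd ℂ) (ψ₂ (x, y))).re,
       -(ψ₁ (x, y) * (starRingEnd ℂ) (ψ₂ (x, y))).im,
       (‖ψ₁ (x, y)‖ ^ 2 - ‖ψ₂ (x, y)‖ ^ 2) / 2,
       (‖ψ₁ (x, y)‖ ^ 2 + ‖ψ₂ (x, y)‖ ^ 2) / 2)) :
    ∀ x y : ℝ,
      fderiv ℝ E₁ (x, y) (0, 1) = fderiv ℝ E₂ (x, y) (1, 0) ∧
      (E₁ (x, y)).1 ^ 2 + (E₁ (x, y)).2.1 ^ 2 + (E₁ (x, y)).2.2.1 ^ 2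
        - (E₁ (x, y)).2.2.2 ^ 2 = 0 ∧
      (E₂ (x, y)).1 ^ 2 + (E₂ (x, y)).2.1 ^ 2 + (E₂ (x, y)).2.2.1 ^ 2
        - (E₂ (x, y)).2.2.2 ^ 2 = 0 := by
  have hE₁' : E₁ = fun q => spinorVector (φ₁ q) (φ₂ q) := funext fun q => hE₁ q.1 q.2
  have hE₂' : E₂ = fun q => spinorVector (ψ₁ q) (ψ₂ q) := funext fun q => hE₂ q.1 q.2
  subst hE₁' hE₂'
  intro x y
  refine ⟨?_, spinorVector_isotropic _ _, spinorVector_isotropic _ _⟩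
  rw [fderiv_spinorVector_apply (hφ₁diff _) (hφ₂diff _),
    fderiv_spinorVector_apply (hψ₁diff _) (hψ₂diff _),
    fderiv_mul_conj_eq_of_dirac (hφ₁diff _) (hφ₂diff _) (hψ₁diff _) (hψ₂diff _)
      (hφ₁ x y) (hφ₂ x y) (hψ₁ x y) (hψ₂ x y),
    fderiv_mul_conj_eq_of_dirac (hφ₁diff _) (hφ₁diff _) (hψ₁diff _) (hψ₁diff _)
      (hφ₁ x y) (hφ₁ x y) (hψ₁ x y) (hψ₁ x y),
    fderiv_mul_conj_eq_of_dirac (hφ₂diff _) (hφ₂diff _) (hψ₂diff _) (hψ₂diff _)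
      (hφ₂ x y) (hφ₂ x y) (hψ₂ x y) (hψ₂ x y)]
end

section
/- Let p, q : ℝ² → ℝ and let φ₁, φ₂, ψ₁, ψ₂ : ℝ² → ℂ be differentiable functions satisfying, for all (x,y) ∈ ℝ², ∂φ₁/∂y = p·ψ₁, ∂ψ₁/∂x = q·φ₁, ∂φ₂/∂y = q·ψ₂, ∂ψ₂/∂x = p·φ₂. Define E₁, E₂ : ℝ² → ℝ⁴ by E₁ = (Re(φ₁φ₂), −Im(φ₁φ₂), Re(φ₁·conj(φ₂)), −Im(φ₁·conj(φ₂))) and E₂ by the same formulas with ψ₁, ψ₂ in place of φ₁, φ₂. Then: (a) for all (x,y), ∂E₁/∂y (x,y) = ∂E₂/∂x (x,y), i.e. the ℝ⁴-valued 1-form E₁ dx + E₂ dy is closed; and (b) Q(E₁(x,y)) = 0 and Q(E₂(x,y)) = 0 for all (x,y), where Q(v) = v₁² + v₂² − v₃² − v₄². -/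
/-!
Write `E₁ = C (φ₁φ₂, φ₁ φ̄₂)` and `E₂ = C (ψ₁ψ₂, ψ₁ ψ̄₂)`, where `C = conjCoords`
is ℝ-linear with `Q (C (z, w)) = |z|² - |w|²`. Isotropy is then `|φ₁φ₂| = |φ₁ φ̄₂|`. For closedness,
the Leibniz rule and the Dirac equations give
`∂_y (φ₁φ₂) = p ψ₁φ₂ + q φ₁ψ₂ = ∂_x (ψ₁ψ₂)`; since `p` and `q` are real, `(φ̄₂, ψ̄₂)` solves the same
system as `(φ₂, ψ₂)`, so the same computation handles `φ₁ φ̄₂`.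
-/

open ComplexConjugate

section Dirac

variable {𝕜 : Type*} [NontriviallyNormedField 𝕜] {E : Type*} [NormedAddCommGroup E]
  [NormedSpace 𝕜 E] {𝔸 : Type*} [NormedCommRing 𝔸] [NormedAlgebra 𝕜 𝔸]

theorem fderiv_mul_apply {f g : E → 𝔸} {v : E} (hf : DifferentiableAt 𝕜 f v)
    (hg : DifferentiableAt 𝕜 g v) (w : E) :
    fderiv 𝕜 (fun u => f u * g u) v w = f v * fderiv 𝕜 g v w + g v * fderiv 𝕜 f v w := by
  simp [fderiv_fun_mul hf hg]

theorem fderiv_mul_eq_of_dirac {f₁ f₂ g₁ g₂ : E → 𝔸} {v a b : E} {P Q : 𝔸}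
    (hf₁d : DifferentiableAt 𝕜 f₁ v) (hf₂d : DifferentiableAt 𝕜 f₂ v)
    (hg₁d : DifferentiableAt 𝕜 g₁ v) (hg₂d : DifferentiableAt 𝕜 g₂ v)
    (hf₁ : fderiv 𝕜 f₁ v b = P * g₁ v) (hg₁ : fderiv 𝕜 g₁ v a = Q * f₁ v)
    (hf₂ : fderiv 𝕜 f₂ v b = Q * g₂ v) (hg₂ : fderiv 𝕜 g₂ v a = P * f₂ v) :
    fderiv 𝕜 (fun u => f₁ u * f₂ u) v b = fderiv 𝕜 (fun u => g₁ u * g₂ u) v a := by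
  rw [fderiv_mul_apply hf₁d hf₂d, fderiv_mul_apply hg₁d hg₂d, hf₁, hg₁, hf₂, hg₂]
  ring

end Dirac

section Conj

variable {E : Type*} [NormedAddCommGroup E] [NormedSpace ℝ E]

theorem fderiv_conj_apply (f : E → ℂ) (v w : E) :
    fderiv ℝ (fun u => conj (f u)) v w = conj (fderiv ℝ f v w) := by
  rw [← Complex.star_def, fderiv_star]
  rfl

theorem fderiv_conj_eq_of_eq_ofReal_mul {f g : E → ℂ} {v w : E} {r : ℝ}
    (h : fderiv ℝ f v w = r * g v) :
    fderiv ℝ (fun u => conj (f u)) v w = r * conj (g v) := by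
  rw [fderiv_conj_apply, h, map_mul, Complex.conj_ofReal]

end Conj

noncomputable def conjCoords : ℂ × ℂ →L[ℝ] ℝ × ℝ × ℝ × ℝ :=
  (Complex.reCLM.comp (.fst ℝ ℂ ℂ)).prod <| ((-Complex.imCLM).comp (.fst ℝ ℂ ℂ)).prod <|
    (Complex.reCLM.comp (.snd ℝ ℂ ℂ)).prod ((-Complex.imCLM).comp (.snd ℝ ℂ ℂ))

@[simp] theorem conjCoords_apply (z w : ℂ) :
    conjCoords (z, w) = (z.re, -z.im, w.re, -w.im) := rfl

theorem fderiv_conjCoords_comp_apply {E : Type*} [NormedAddCommGroup E] [NormedSpace ℝ E]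
    {F G : E → ℂ} {v : E} (hF : DifferentiableAt ℝ F v) (hG : DifferentiableAt ℝ G v) (w : E) :
    fderiv ℝ (fun u => conjCoords (F u, G u)) v w =
      conjCoords (fderiv ℝ F v w, fderiv ℝ G v w) := by
  rw [show (fun u => conjCoords (F u, G u)) = conjCoords ∘ fun u => (F u, G u) from rfl,
    (conjCoords.hasFDerivAt.comp v (hF.hasFDerivAt.prodMk hG.hasFDerivAt)).fderiv]
  rfl

def quadForm22 (v : ℝ × ℝ × ℝ × ℝ) : ℝ := v.1 ^ 2 + v.2.1 ^ 2 - v.2.2.1 ^ 2 - v.2.2.2 ^ 2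

theorem quadForm22_conjCoords (z w : ℂ) :
    quadForm22 (conjCoords (z, w)) = Complex.normSq z - Complex.normSq w := by
  simp only [quadForm22, conjCoords_apply, Complex.normSq_apply]
  ring

theorem quadForm22_conjCoords_mul_mul_conj (z w : ℂ) :
    quadForm22 (conjCoords (z * w, z * conj w)) = 0 := by
  rw [quadForm22_conjCoords, map_mul, map_mul, Complex.normSq_conj, sub_self]

/-- Closedness and isotropy of the ℝ⁴-valued 1-form E₁ dx + E₂ dy built from a
solution of the Dirac equations, underlying the Weierstrass representation of time-like
surfaces in ℝ^{2,2}. -/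
theorem weierstrass_R22_closed_isotropic
    (p q : ℝ × ℝ → ℝ) (φ₁ φ₂ ψ₁ ψ₂ : ℝ × ℝ → ℂ)
    (hφ₁diff : Differentiable ℝ φ₁) (hφ₂diff : Differentiable ℝ φ₂)
    (hψ₁diff : Differentiable ℝ ψ₁) (hψ₂diff : Differentiable ℝ ψ₂)
    (hφ₁ : ∀ x y : ℝ, fderiv ℝ φ₁ (x, y) (0, 1) = (p (x, y) : ℂ) * ψ₁ (x, y))
    (hψ₁ : ∀ x y : ℝ, fderiv ℝ ψ₁ (x, y) (1, 0) = (q (x, y) : ℂ) * φ₁ (x, y))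
    (hφ₂ : ∀ x y : ℝ, fderiv ℝ φ₂ (x, y) (0, 1) = (q (x, y) : ℂ) * ψ₂ (x, y))
    (hψ₂ : ∀ x y : ℝ, fderiv ℝ ψ₂ (x, y) (1, 0) = (p (x, y) : ℂ) * φ₂ (x, y))
    (E₁ E₂ : ℝ × ℝ → ℝ × ℝ × ℝ × ℝ)
    (hE₁ : ∀ x y : ℝ, E₁ (x, y) =
      ((φ₁ (x, y) * φ₂ (x, y)).re, -(φ₁ (x, y) * φ₂ (x, y)).im,
       (φ₁ (x, y) * (starRingEnd ℂ) (φ₂ (x, y))).re,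
       -(φ₁ (x, y) * (starRingEnd ℂ) (φ₂ (x, y))).im))
    (hE₂ : ∀ x y : ℝ, E₂ (x, y) =
      ((ψ₁ (x, y) * ψ₂ (x, y)).re, -(ψ₁ (x, y) * ψ₂ (x, y)).im,
       (ψ₁ (x, y) * (starRingEnd ℂ) (ψ₂ (x, y))).re,
       -(ψ₁ (x, y) * (starRingEnd ℂ) (ψ₂ (x, y))).im)) :
    ∀ x y : ℝ,
      fderiv ℝ E₁ (x, y) (0, 1) = fderiv ℝ E₂ (x, y) (1, 0) ∧
      (E₁ (x, y)).1 ^ 2 + (E₁ (x, y)).2.1 ^ 2 - (E₁ (x, y)).2.2.1 ^ 2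
        - (E₁ (x, y)).2.2.2 ^ 2 = 0 ∧
      (E₂ (x, y)).1 ^ 2 + (E₂ (x, y)).2.1 ^ 2 - (E₂ (x, y)).2.2.1 ^ 2
        - (E₂ (x, y)).2.2.2 ^ 2 = 0 := by
  obtain rfl : E₁ = fun u => conjCoords (φ₁ u * φ₂ u, φ₁ u * conj (φ₂ u)) :=
    funext fun (a, b) => hE₁ a b
  obtain rfl : E₂ = fun u => conjCoords (ψ₁ u * ψ₂ u, ψ₁ u * conj (ψ₂ u)) :=
    funext fun (a, b) => hE₂ a b
  intro x y
  refine ⟨?_, quadForm22_conjCoords_mul_mul_conj _ _, quadForm22_conjCoords_mul_mul_conj _ _⟩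
  have hφ₂conj : Differentiable ℝ fun u => conj (φ₂ u) := hφ₂diff.star
  have hψ₂conj : Differentiable ℝ fun u => conj (ψ₂ u) := hψ₂diff.star
  have hmul := fderiv_mul_eq_of_dirac (hφ₁diff _) (hφ₂diff _) (hψ₁diff _) (hψ₂diff _)
    (hφ₁ x y) (hψ₁ x y) (hφ₂ x y) (hψ₂ x y)
  have hmul_conj := fderiv_mul_eq_of_dirac (hφ₁diff _) (hφ₂conj _) (hψ₁diff _) (hψ₂conj _)
    (hφ₁ x y) (hψ₁ x y) (fderiv_conj_eq_of_eq_ofReal_mul (hφ₂ x y))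
    (fderiv_conj_eq_of_eq_ofReal_mul (hψ₂ x y))
  rw [fderiv_conjCoords_comp_apply ((hφ₁diff _).fun_mul (hφ₂diff _))
      ((hφ₁diff _).fun_mul (hφ₂conj _)),
    fderiv_conjCoords_comp_apply ((hψ₁diff _).fun_mul (hψ₂diff _))
      ((hψ₁diff _).fun_mul (hψ₂conj _)),
    hmul, hmul_conj]
end
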